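/- Let (a_𝐧)_{𝐧∈ℕ₀^d} be the coefficients of a d-multiple Walsh series and let τ be the quasimeasure generated by this series. If 𝐠 ∉ supp τ, then there exists w ∈ ℕ₀ such that the rectangular partial sums satisfy S_{2^w𝐌}(𝐠) = 0 for all 𝐌 ∈ ℕ^d, where 2^w𝐌 = (2^w M^1,…,2^w M^d). -/

import Mathlib

open Filter Finset Topology MeasureTheory
open scoped Classical

noncomputable section

instance : TopologicalSpace (ZMod 2) := ⊥
instance : DiscreteTopology (ZMod 2) := ⟨rfl⟩

/-- The dyadic (Cantor) group `𝔾`: sequences of elements of `ℤ/2ℤ`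
with coordinatewise addition modulo 2, Tychonoff topology. -/
abbrev DyadicGroup : Type := ℕ → ZMod 2

instance : MeasurableSpace DyadicGroup := borel _
instance : BorelSpace DyadicGroup := ⟨rfl⟩

/-- `𝔾^d`. -/
abbrev GD (d : ℕ) : Type := Fin d → DyadicGroup

/-- One-dimensional Walsh function `W_n` in the Paley enumeration:
`W_n(g) = ∏_k (-1)^(g_k n_k)`. -/
def walsh (n : ℕ) (g : DyadicGroup) : ℝ :=
  ∏ k ∈ Finset.range n, if n.testBit k ∧ g k = 1 then (-1 : ℝ) else 1

/-- `d`-dimensional Walsh function `W_𝐧(𝐠) = ∏ W_{n^l}(g^l)`. -/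
def walshD {d : ℕ} (n : Fin d → ℕ) (g : GD d) : ℝ :=
  ∏ l, walsh (n l) (g l)

/-- The dyadic interval `Δ^{(k)}_m` of rank `k`. -/
def dyadicInterval (k m : ℕ) : Set DyadicGroup :=
  {g | ∀ t < k, g t = if m.testBit (k - 1 - t) then 1 else 0}

/-- The dyadic cube `Δ^{(k)}_𝐦 = Δ^{(k)}_{m^1} × ⋯ × Δ^{(k)}_{m^d}`. -/
def dyadicCube {d : ℕ} (k : ℕ) (m : Fin d → ℕ) : Set (GD d) :=
  {g | ∀ l, g l ∈ dyadicInterval k (m l)}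

/-- The canonical point of `Δ^{(k)}_m`. -/
def intervalPoint (k m : ℕ) : DyadicGroup :=
  fun t => if t < k ∧ m.testBit (k - 1 - t) then 1 else 0

/-- The canonical point of `Δ^{(k)}_𝐦`. -/
def cubePoint {d : ℕ} (k : ℕ) (m : Fin d → ℕ) : GD d :=
  fun l => intervalPoint k (m l)

/-- `W^{(k)}_{n,m}`: the (constant, for `n < 2^k`) value of `W_n` on `Δ^{(k)}_m`. -/
def walshVal (k n m : ℕ) : ℝ := walsh n (intervalPoint k m)

/-- `W^{(k)}_{𝐧𝐦}`: the (constant, for `𝐧 < 2^k·𝟏`) value of `W_𝐧` on `Δ^{(k)}_𝐦`. -/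
def walshValD {d : ℕ} (k : ℕ) (n m : Fin d → ℕ) : ℝ := walshD n (cubePoint k m)

/-- The box `{𝐧 : 𝐧 < 𝐍}` as a finset. -/
def boxLt {d : ℕ} (N : Fin d → ℕ) : Finset (Fin d → ℕ) :=
  Fintype.piFinset fun l => Finset.range (N l)

/-- The box `{0,…,2^k−1}^d` as a set. -/
def box (d k : ℕ) : Set (Fin d → ℕ) := {m | ∀ l, m l < 2 ^ k}

/-- The rectangular partial sum `S_𝐍(𝐠)` of the Walsh series with coefficients `a`. -/
def walshPartialSum {d : ℕ} (a : (Fin d → ℕ) → ℂ) (N : Fin d → ℕ) (g : GD d) : ℂ :=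
  ∑ n ∈ boxLt N, a n * (walshD n g : ℂ)

/-- Convergence over rectangles: `S_𝐍(𝐠) → S` as `min_j N^j → ∞`. -/
def ConvergesOverRectangles {d : ℕ} (a : (Fin d → ℕ) → ℂ) (g : GD d) (S : ℂ) : Prop :=
  Tendsto (fun N : Fin d → ℕ => walshPartialSum a N g) atTop (𝓝 S)

/-- Convergence over cubes: `S_{N𝟏}(𝐠) → S` as `N → ∞`. -/
def ConvergesOverCubes {d : ℕ} (a : (Fin d → ℕ) → ℂ) (g : GD d) (S : ℂ) : Prop :=
  Tendsto (fun N : ℕ => walshPartialSum a (fun _ => N) g) atTop (𝓝 S)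

/-- `λ`-convergence: `S_𝐍(𝐠) → S` as `min_j N^j → ∞` along `𝐍` with `max N^j/N^k ≤ λ`. -/
def LambdaConverges {d : ℕ} (lam : ℝ) (a : (Fin d → ℕ) → ℂ) (g : GD d) (S : ℂ) : Prop :=
  ∀ ε : ℝ, 0 < ε → ∃ K : ℕ, ∀ N : Fin d → ℕ, (∀ j, K ≤ N j) →
    (∀ j k, (N j : ℝ) ≤ lam * N k) → ‖walshPartialSum a N g - S‖ < ε

/-- Auxiliary predicate for iterated summation of a multiple series with terms `f`;
the list gives the order of summation, *innermost index first*.  After summing the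
series in the variables of the list, the remaining (partially summed) function is `g`. -/
def IterConvAux {d : ℕ} : List (Fin d) → ((Fin d → ℕ) → ℂ) → ((Fin d → ℕ) → ℂ) → Prop
  | [], f, g => f = g
  | j :: rest, f, g => ∃ h : (Fin d → ℕ) → ℂ,
      (∀ n, Tendsto (fun T : ℕ => ∑ t ∈ Finset.range T, f (Function.update n j t))
        atTop (𝓝 (h n))) ∧ IterConvAux rest h g

/-- The multiple series with terms `f` converges iteratedly to `S`, the order of
summation being given by the list `l` (innermost index first): all successively
nested inner series converge and the full iterated sum equals `S`. -/
def IterConverges {d : ℕ} (l : List (Fin d)) (f : (Fin d → ℕ) → ℂ) (S : ℂ) : Prop :=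
  ∃ g, IterConvAux l f g ∧ ∀ n, g n = S

/-- `A` is an M-set for the `d`-dimensional Walsh system under rectangular convergence. -/
def IsMSetRect {d : ℕ} (A : Set (GD d)) : Prop :=
  ∃ a : (Fin d → ℕ) → ℂ, (∃ n, a n ≠ 0) ∧ ∀ g ∉ A, ConvergesOverRectangles a g 0

/-- `A` is an M-set for the `d`-dimensional Walsh system under convergence over cubes. -/
def IsMSetCubes {d : ℕ} (A : Set (GD d)) : Prop :=
  ∃ a : (Fin d → ℕ) → ℂ, (∃ n, a n ≠ 0) ∧ ∀ g ∉ A, ConvergesOverCubes a g 0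

/-- `A` is an M-set under iterated convergence with summation order `l` (innermost first). -/
def IsMSetIter {d : ℕ} (A : Set (GD d)) (l : List (Fin d)) : Prop :=
  ∃ a : (Fin d → ℕ) → ℂ, (∃ n, a n ≠ 0) ∧
    ∀ g ∉ A, IterConverges l (fun n => a n * (walshD n g : ℂ)) 0

/-- `A` is an M-set for the `d`-dimensional Walsh system under `λ`-convergence. -/
def IsMSetLambda {d : ℕ} (lam : ℝ) (A : Set (GD d)) : Prop :=
  ∃ a : (Fin d → ℕ) → ℂ, (∃ n, a n ≠ 0) ∧ ∀ g ∉ A, LambdaConverges lam a g 0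

/-- A quasimeasure: a finitely additive function on dyadic cubes (indexed by rank
`k` and position `𝐦 < 2^k·𝟏`). -/
def IsQuasimeasure {d : ℕ} (τ : ℕ → (Fin d → ℕ) → ℂ) : Prop :=
  ∀ k m, (∀ l, m l < 2 ^ k) →
    τ k m = ∑ σ : Fin d → Fin 2, τ (k + 1) fun l => 2 * m l + (σ l : ℕ)

/-- The quasimeasure generated by the Walsh series with coefficients `a`:
`τ(Δ^{(k)}_𝐦) = 2^{-kd} ∑_{𝐧<2^k𝟏} a_𝐧 W_𝐧(Δ^{(k)}_𝐦)`. -/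
def genQM {d : ℕ} (a : (Fin d → ℕ) → ℂ) (k : ℕ) (m : Fin d → ℕ) : ℂ :=
  ((2 : ℂ) ^ (k * d))⁻¹ * ∑ n ∈ boxLt (fun _ : Fin d => 2 ^ k), a n * (walshValD k n m : ℂ)

/-- The Fourier–Walsh coefficient `τ̂_𝐧` of a quasimeasure `τ`, computed at resolution `k`
(the value does not depend on `k` as long as `𝐧 < 2^k𝟏`). -/
def fourierCoeffAt {d : ℕ} (τ : ℕ → (Fin d → ℕ) → ℂ) (n : Fin d → ℕ) (k : ℕ) : ℂ :=
  ∑ m ∈ boxLt (fun _ : Fin d => 2 ^ k), (walshValD k n m : ℂ) * τ k m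

/-- The local Fourier–Walsh coefficient `τ̂_𝐧(Δ^{(r)}_{𝐦Δ})`, computed at resolution `k ≥ r`. -/
def localCoeffAt {d : ℕ} (τ : ℕ → (Fin d → ℕ) → ℂ) (n : Fin d → ℕ)
    (r : ℕ) (mΔ : Fin d → ℕ) (k : ℕ) : ℂ :=
  ∑ m ∈ (boxLt (fun _ : Fin d => 2 ^ k)).filter
      (fun m => dyadicCube k m ⊆ dyadicCube r mΔ),
    (walshValD k n m : ℂ) * τ k m

/-- The support of a quasimeasure: the complement of the union of all dyadic cubes `Δ₀`
such that `τ(Δ) = 0` for every dyadic cube `Δ ⊆ Δ₀`. -/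
def qmSupport {d : ℕ} (τ : ℕ → (Fin d → ℕ) → ℂ) : Set (GD d) :=
  (⋃ k, ⋃ m ∈ box d k,
    ⋃ (_ : ∀ k' m', (∀ l, m' l < 2 ^ k') →
        dyadicCube k' m' ⊆ dyadicCube k m → τ k' m' = 0),
    dyadicCube k m)ᶜ

/-- The restriction `τ|_{Δ̃}` of a quasimeasure to the dyadic cube `Δ̃ = Δ^{(r)}_{𝐦Δ}`:
`τ|_{Δ̃}(Δ) = τ(Δ̃ ∩ Δ)` (two dyadic cubes are nested or disjoint). -/
def restrictQM {d : ℕ} (τ : ℕ → (Fin d → ℕ) → ℂ) (r : ℕ) (mΔ : Fin d → ℕ) :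
    ℕ → (Fin d → ℕ) → ℂ := fun k m =>
  if dyadicCube k m ⊆ dyadicCube (d := d) r mΔ then τ k m
  else if dyadicCube (d := d) r mΔ ⊆ dyadicCube k m then τ r mΔ
  else 0

/-- `τ` is the canonical quasimeasure `τ_E` associated with a (nonempty closed) set `E`:
`τ(𝔾^d) = 1`; `τ(Δ) = 0` iff `Δ ∩ E = ∅`; and the mass of a cube meeting `E` is divided
equally among its `2^d` immediate subcubes that meet `E`. -/
def IsTauOf {d : ℕ} (E : Set (GD d)) (τ : ℕ → (Fin d → ℕ) → ℂ) : Prop :=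
  IsQuasimeasure τ ∧
  τ 0 (fun _ => 0) = 1 ∧
  (∀ k m, (∀ l, m l < 2 ^ k) → (τ k m = 0 ↔ dyadicCube k m ∩ E = ∅)) ∧
  (∀ k m, (∀ l, m l < 2 ^ k) → (dyadicCube k m ∩ E).Nonempty →
    ∀ σ : Fin d → Fin 2,
      τ (k + 1) (fun l => 2 * m l + (σ l : ℕ)) =
        if (dyadicCube (k + 1) (fun l => 2 * m l + (σ l : ℕ)) ∩ E).Nonempty then
          τ k m / ((Finset.univ.filter fun σ' : Fin d → Fin 2 =>
              (dyadicCube (k + 1) (fun l => 2 * m l + (σ' l : ℕ)) ∩ E).Nonempty).card : ℂ)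
        else 0)

/-- The sequence `m_s`: `m_1 = 0`, `m_{s+1} = 2(2m_s+1)` (value at `0` is junk). -/
def mSeq : ℕ → ℕ
  | 0 => 0
  | s + 1 => if s = 0 then 0 else 2 * (2 * mSeq s + 1)

/-- The layer `F_s^π`. -/
def Fspi {d : ℕ} (π : ℕ → (Fin d → ℕ) → Fin d → ℕ) (s : ℕ) : Set (GD d) :=
  ⋃ m ∈ box d (mSeq s), ⋃ m' ∈ box d (mSeq s),
    {g | g ∈ dyadicCube (2 * mSeq s) (fun l => 2 ^ mSeq s * m l + m' l) ∧
      walshD (fun _ => 2 ^ (2 * mSeq s)) g = walshValD (mSeq s) (π s m) m'}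

/-- `F̃_s^π = F_1^π ∩ ⋯ ∩ F_s^π` (so `F̃_0^π = 𝔾^d`). -/
def Ftil {d : ℕ} (π : ℕ → (Fin d → ℕ) → Fin d → ℕ) (s : ℕ) : Set (GD d) :=
  ⋂ k ∈ Finset.Icc 1 s, Fspi π k

/-- `F^π = ⋂_{s≥1} F_s^π`. -/
def Fpi {d : ℕ} (π : ℕ → (Fin d → ℕ) → Fin d → ℕ) : Set (GD d) :=
  ⋂ s ∈ Set.Ici 1, Fspi π s

/-- The identity element of `S` (yielding `F_s`, `F̃_s` and `F` themselves). -/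
def idPerm (d : ℕ) : ℕ → (Fin d → ℕ) → Fin d → ℕ := fun _ m => m

/-- `S`: sequences `π = (π_s)` of permutations of the boxes `{0,…,2^{m_s}−1}^d`. -/
structure PermSeq (d : ℕ) where
  p : ℕ → Equiv.Perm (Fin d → ℕ)
  maps : ∀ s, Set.MapsTo (p s) (box d (mSeq s)) (box d (mSeq s))

/-- The underlying sequence of functions of an element of `S`. -/
def PermSeq.f {d : ℕ} (π : PermSeq d) : ℕ → (Fin d → ℕ) → Fin d → ℕ := fun s => ⇑(π.p s)

/-- `π ∈ S'`: every `π_s` acts coordinatewise, `π_s(𝐦) = (π_s^1(m^1),…,π_s^d(m^d))`. -/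
def PermSeq.Coordinatewise {d : ℕ} (π : PermSeq d) : Prop :=
  ∀ s, ∃ e : Fin d → ℕ → ℕ, ∀ m : Fin d → ℕ, π.p s m = fun l => e l (m l)

/-- The Dirichlet kernel `D_N = ∑_{n<N} W_n` of the one-dimensional Walsh system. -/
def dirichlet (N : ℕ) (g : DyadicGroup) : ℝ :=
  ∑ n ∈ Finset.range N, walsh n g

/-! If `𝐠` lies in a dyadic cube `Δ^{(k)}_𝐦` on all of whose subcubes `τ` vanishes, take `w = k`.
Walsh–Fourier inversion on the finite group of cubes of a large rank `K` gives
`S_𝐍(𝐠) = ∑_Δ τ(Δ) ∑_{𝐧<𝐍} W_𝐧(Δ) W_𝐧(𝐠)` for `𝐍 ≤ 2^K𝟏`. For `𝐍 = 2^k𝐌` the kernel factors over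
the coordinates, and the one-dimensional factor `∑_{n<2^k M} W_n(p) W_n(q)` vanishes as soon as
`p` and `q` differ at a coordinate `t < k`, since `n ↦ n xor 2^t` is a sign-reversing involution of
`[0, 2^k M)`. Hence only the cubes `Δ ⊆ Δ^{(k)}_𝐦` contribute, and on those `τ(Δ) = 0`. -/

theorem Finset.sum_eq_zero_of_involutive_of_neg {ι M : Type*} [AddCommGroup M]
    [IsAddTorsionFree M] {s : Finset ι} {f : ι → M} (e : ι → ι) (he : ∀ x ∈ s, e x ∈ s)
    (hee : ∀ x, e (e x) = x) (hf : ∀ x ∈ s, f (e x) = -f x) : ∑ x ∈ s, f x = 0 := by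
  refine self_eq_neg.mp ?_
  calc ∑ x ∈ s, f x = ∑ x ∈ s, f (e x) :=
        sum_nbij' e e he he (fun x _ => hee x) (fun x _ => hee x) fun x _ => by rw [hee]
    _ = -∑ x ∈ s, f x := by rw [← sum_neg_distrib]; exact sum_congr rfl hf

theorem Finset.prod_eq_mul_prod_of_eq_off {ι M : Type*} [CommMonoid M] [DecidableEq ι]
    {s : Finset ι} {t : ι} (ht : t ∈ s) {f f' : ι → M} (hoff : ∀ k ≠ t, f' k = f k) {c : M}
    (hc : f' t = c * f t) : ∏ k ∈ s, f' k = c * ∏ k ∈ s, f k := by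
  rw [← mul_prod_erase _ f' ht, ← mul_prod_erase _ f ht, hc, mul_assoc,
    prod_congr rfl fun k hk => hoff k (ne_of_mem_erase hk)]

theorem Nat.xor_two_pow_lt_two_pow_mul {n t w M : ℕ} (ht : t < w) (hn : n < 2 ^ w * M) :
    n ^^^ 2 ^ t < 2 ^ w * M := by
  rw [mul_comm, ← Nat.div_lt_iff_lt_mul (by positivity)] at hn ⊢
  rwa [Nat.xor_div_two_pow, Nat.div_eq_of_lt (Nat.pow_lt_pow_right one_lt_two ht), Nat.xor_zero]

theorem ZMod.two_eq_zero_or_one (x : ZMod 2) : x = 0 ∨ x = 1 := by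
  revert x; decide

theorem walsh_eq_prod_range {n K : ℕ} (hn : n < 2 ^ K) (g : DyadicGroup) :
    walsh n g = ∏ k ∈ range K, if n.testBit k ∧ g k = 1 then (-1 : ℝ) else 1 := by
  have extend : ∀ {K K'}, n < 2 ^ K → K ≤ K' →
      (∏ k ∈ range K', if n.testBit k ∧ g k = 1 then (-1 : ℝ) else 1)
        = ∏ k ∈ range K, if n.testBit k ∧ g k = 1 then (-1 : ℝ) else 1 := by
    intro K K' hK hKK'
    refine (prod_subset (range_subset_range.2 hKK') fun k _ hk => ?_).symm
    rw [Nat.testBit_lt_two_pow (hK.trans_le (Nat.pow_le_pow_right two_pos (by simpa using hk)))]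
    simp
  rw [walsh, ← extend Nat.lt_two_pow_self (le_max_left n K), extend hn (le_max_right n K)]

theorem walsh_xor_two_pow (n t : ℕ) (g : DyadicGroup) :
    walsh (n ^^^ 2 ^ t) g = (if g t = 1 then -1 else 1) * walsh n g := by
  have hn : n < 2 ^ (n + t + 1) :=
    Nat.lt_two_pow_self.trans_le (Nat.pow_le_pow_right two_pos (by omega))
  have ht : 2 ^ t < 2 ^ (n + t + 1) := Nat.pow_lt_pow_right one_lt_two (by omega)
  rw [walsh_eq_prod_range (Nat.xor_lt_two_pow hn ht), walsh_eq_prod_range hn]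
  refine prod_eq_mul_prod_of_eq_off (mem_range.2 (show t < n + t + 1 by omega))
    (fun k hk => ?_) ?_
  · simp [Nat.testBit_xor, Ne.symm hk]
  · by_cases hb : n.testBit t <;> by_cases hg : g t = 1 <;>
      simp [Nat.testBit_xor, hb, hg]

theorem walsh_add_single (n t : ℕ) (g : DyadicGroup) :
    walsh n (g + Pi.single t 1) = (if n.testBit t then -1 else 1) * walsh n g := by
  have hn : n < 2 ^ (n + t + 1) :=
    Nat.lt_two_pow_self.trans_le (Nat.pow_le_pow_right two_pos (by omega))
  rw [walsh_eq_prod_range hn, walsh_eq_prod_range hn]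
  refine prod_eq_mul_prod_of_eq_off (mem_range.2 (show t < n + t + 1 by omega))
    (fun k hk => ?_) ?_
  · simp [hk]
  · simp only [Pi.add_apply, Pi.single_eq_same]
    rcases ZMod.two_eq_zero_or_one (g t) with hg | hg <;> by_cases hb : n.testBit t <;>
      simp [hg, hb, show (1 + 1 : ZMod 2) = 0 from rfl]

theorem walsh_mul_self (n : ℕ) (g : DyadicGroup) : walsh n g * walsh n g = 1 := by
  rw [walsh, ← prod_mul_distrib]
  exact prod_eq_one fun k _ => by split <;> norm_num

theorem intervalPoint_xor_two_pow {K t : ℕ} (ht : t < K) (m : ℕ) :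
    intervalPoint K (m ^^^ 2 ^ (K - 1 - t)) = intervalPoint K m + Pi.single t 1 := by
  funext s
  by_cases hs : s = t
  · subst hs
    by_cases hb : m.testBit (K - 1 - s) <;> simp [intervalPoint, ht, hb, Nat.testBit_xor]
    all_goals decide
  · have hbit : K - 1 - t ≠ K - 1 - s ∨ ¬ s < K := by omega
    rcases hbit with h | h <;> simp [intervalPoint, Nat.testBit_xor, Nat.testBit_two_pow, hs, h]

theorem sum_walshVal_mul_walshVal {K n n' : ℕ} (hn : n < 2 ^ K) (hn' : n' < 2 ^ K) :
    ∑ m ∈ range (2 ^ K), walshVal K n m * walshVal K n' m = if n = n' then 2 ^ K else 0 := by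
  split_ifs with h
  · simp [h, walshVal, walsh_mul_self]
  obtain ⟨t, ht⟩ := Nat.exists_testBit_ne_of_ne h
  have htK : t < K := by
    by_contra! hKt
    have hpow := Nat.pow_le_pow_right two_pos hKt
    rw [Nat.testBit_lt_two_pow (hn.trans_le hpow), Nat.testBit_lt_two_pow (hn'.trans_le hpow)] at ht
    exact ht rfl
  -- `intervalPoint` stores the digits of `m` in reverse order, so `m ↦ m xor 2^(K-1-t)` flips
  -- coordinate `t`, where exactly one of `W_n`, `W_n'` changes sign
  refine sum_eq_zero_of_involutive_of_neg (· ^^^ 2 ^ (K - 1 - t))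
    (fun m hm => mem_range.2 (Nat.xor_lt_two_pow (mem_range.1 hm)
      (Nat.pow_lt_pow_right one_lt_two (by omega))))
    (fun m => Nat.xor_xor_cancel_right m _) fun m _ => ?_
  simp only [walshVal, intervalPoint_xor_two_pow htK, walsh_add_single]
  cases hb : n.testBit t <;> cases hb' : n'.testBit t <;> simp_all

theorem sum_walsh_mul_walsh_eq_zero {w M t : ℕ} (ht : t < w) {p q : DyadicGroup}
    (hpq : p t ≠ q t) : ∑ n ∈ range (2 ^ w * M), walsh n p * walsh n q = 0 := by
  refine sum_eq_zero_of_involutive_of_neg (· ^^^ 2 ^ t)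
    (fun n hn => mem_range.2 (Nat.xor_two_pow_lt_two_pow_mul ht (mem_range.1 hn)))
    (fun n => Nat.xor_xor_cancel_right n _) fun n _ => ?_
  have hsign : (if p t = 1 then -1 else 1) * (if q t = 1 then -1 else 1) = (-1 : ℝ) := by
    rcases ZMod.two_eq_zero_or_one (p t) with hp | hp <;>
      rcases ZMod.two_eq_zero_or_one (q t) with hq | hq <;> simp_all
  rw [walsh_xor_two_pow, walsh_xor_two_pow]
  linear_combination (walsh n p * walsh n q) * hsign

theorem sum_boxLt_prod {R : Type*} [CommSemiring R] {d : ℕ} (N : Fin d → ℕ)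
    (f : Fin d → ℕ → R) :
    ∑ n ∈ boxLt N, ∏ l, f l (n l) = ∏ l, ∑ x ∈ range (N l), f l x :=
  (prod_univ_sum _ _).symm

theorem mem_boxLt {d : ℕ} {N n : Fin d → ℕ} : n ∈ boxLt N ↔ ∀ l, n l < N l := by
  simp [boxLt]

theorem sum_walshValD_mul_walshValD {d K : ℕ} {n n' : Fin d → ℕ} (hn : ∀ l, n l < 2 ^ K)
    (hn' : ∀ l, n' l < 2 ^ K) :
    ∑ m ∈ boxLt (fun _ : Fin d => 2 ^ K), walshValD K n m * walshValD K n' m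
      = if n = n' then ((2 : ℝ) ^ K) ^ d else 0 := by
  simp only [walshValD, walshD, cubePoint, ← prod_mul_distrib]
  refine (sum_boxLt_prod _ fun l x => walshVal K (n l) x * walshVal K (n' l) x).trans ?_
  simp only [sum_walshVal_mul_walshVal (hn _) (hn' _)]
  split_ifs with h
  · simp [h]
  · obtain ⟨l, hl⟩ := Function.ne_iff.1 h
    exact prod_eq_zero (mem_univ l) (if_neg hl)

theorem sum_walshValD_mul_genQM {d K : ℕ} (a : (Fin d → ℕ) → ℂ) {n : Fin d → ℕ}
    (hn : ∀ l, n l < 2 ^ K) :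
    ∑ m ∈ boxLt (fun _ : Fin d => 2 ^ K), (walshValD K n m : ℂ) * genQM a K m = a n := by
  have horth : ∀ n' ∈ boxLt (fun _ : Fin d => 2 ^ K),
      ∑ m ∈ boxLt (fun _ : Fin d => 2 ^ K), (walshValD K n m : ℂ) * walshValD K n' m
        = if n = n' then (2 : ℂ) ^ (K * d) else 0 := fun n' hn' => by
    have h := sum_walshValD_mul_walshValD hn (mem_boxLt.1 hn')
    rw [pow_mul]
    split_ifs at h ⊢ <;> exact_mod_cast h
  calc ∑ m ∈ boxLt (fun _ : Fin d => 2 ^ K), (walshValD K n m : ℂ) * genQM a K m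
      = ∑ n' ∈ boxLt (fun _ : Fin d => 2 ^ K), a n' * ((2 : ℂ) ^ (K * d))⁻¹ *
          ∑ m ∈ boxLt (fun _ : Fin d => 2 ^ K), (walshValD K n m : ℂ) * walshValD K n' m := by
        simp only [genQM, mul_sum]
        rw [sum_comm]
        exact sum_congr rfl fun _ _ => sum_congr rfl fun _ _ => by ring
    _ = a n := by
        rw [sum_congr rfl fun n' hn' => by rw [horth n' hn']]
        simp [mem_boxLt.2 hn]

theorem walshPartialSum_eq_sum_genQM {d K : ℕ} (a : (Fin d → ℕ) → ℂ) {N : Fin d → ℕ}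
    (hN : ∀ l, N l ≤ 2 ^ K) (g : GD d) :
    walshPartialSum a N g = ∑ m ∈ boxLt (fun _ : Fin d => 2 ^ K),
      genQM a K m * ((∑ n ∈ boxLt N, walshD n (cubePoint K m) * walshD n g : ℝ) : ℂ) := by
  calc walshPartialSum a N g
      = ∑ n ∈ boxLt N, (∑ m ∈ boxLt (fun _ : Fin d => 2 ^ K),
          (walshValD K n m : ℂ) * genQM a K m) * walshD n g :=
        sum_congr rfl fun n hn => by
          rw [sum_walshValD_mul_genQM a fun l => (mem_boxLt.1 hn l).trans_le (hN l)]
    _ = _ := by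
        simp only [sum_mul, mul_sum, Complex.ofReal_sum, Complex.ofReal_mul, walshValD]
        rw [sum_comm]
        exact sum_congr rfl fun _ _ => sum_congr rfl fun _ _ => by ring

theorem sum_walshD_mul_walshD_eq_zero {d w t : ℕ} (M : Fin d → ℕ) (ht : t < w) {p q : GD d}
    {l : Fin d} (hpq : p l t ≠ q l t) :
    ∑ n ∈ boxLt (fun l => 2 ^ w * M l), walshD n p * walshD n q = 0 := by
  simp only [walshD, ← prod_mul_distrib]
  rw [sum_boxLt_prod _ fun l x => walsh x (p l) * walsh x (q l)]
  exact prod_eq_zero (mem_univ l) (sum_walsh_mul_walsh_eq_zero ht hpq)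

theorem dyadicCube_subset_of_cubePoint_mem {d k K : ℕ} (hkK : k ≤ K) {m m' : Fin d → ℕ}
    (h : cubePoint K m' ∈ dyadicCube k m) : dyadicCube K m' ⊆ dyadicCube k m := by
  intro x hx l t ht
  rw [← h l t ht, hx l t (ht.trans_le hkK)]
  simp [cubePoint, intervalPoint, ht.trans_le hkK]

theorem statement5_general (d : ℕ) (a : (Fin d → ℕ) → ℂ)
    (g : GD d) (hg : g ∉ qmSupport (genQM a)) :
    ∃ w : ℕ, ∀ M : Fin d → ℕ, (∀ l, 1 ≤ M l) →
      walshPartialSum a (fun l => 2 ^ w * M l) g = 0 := by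
  simp only [qmSupport, Set.notMem_compl_iff, Set.mem_iUnion, exists_prop] at hg
  obtain ⟨k, m, -, hτ, hgm⟩ := hg
  refine ⟨k, fun M _ => ?_⟩
  set K := k + ∑ l, M l
  have hMK : ∀ l, 2 ^ k * M l ≤ 2 ^ K := fun l => by
    rw [pow_add]
    exact Nat.mul_le_mul_left _ ((single_le_sum (by simp) (mem_univ l)).trans
      Nat.lt_two_pow_self.le)
  rw [walshPartialSum_eq_sum_genQM a hMK]
  refine sum_eq_zero fun m' hm' => ?_
  by_cases hsub : cubePoint K m' ∈ dyadicCube k m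
  · rw [hτ K m' (mem_boxLt.1 hm') (dyadicCube_subset_of_cubePoint_mem (by omega) hsub), zero_mul]
  · obtain ⟨l, t, ht, hne⟩ : ∃ l, ∃ t < k, cubePoint K m' l t ≠ g l t := by
      by_contra! hall
      exact hsub fun l t ht => (hall l t ht).trans (hgm l t ht)
    rw [sum_walshD_mul_walshD_eq_zero M ht hne, Complex.ofReal_zero, mul_zero]

/-- if `𝐠 ∉ supp τ`, where `τ` is the quasimeasure generated by a Walsh
series, then there is `w ∈ ℕ₀` with `S_{2^w𝐌}(𝐠) = 0` for all `𝐌 ∈ ℕ^d`. -/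
theorem statement5 (d : ℕ) (hd : 2 ≤ d) (a : (Fin d → ℕ) → ℂ)
    (g : GD d) (hg : g ∉ qmSupport (genQM a)) :
    ∃ w : ℕ, ∀ M : Fin d → ℕ, (∀ l, 1 ≤ M l) →
      walshPartialSum a (fun l => 2 ^ w * M l) g = 0 :=
  statement5_general d a g hg
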